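/- For every n ≥ 0 there exists an indecomposable representation M of Q with dimension vector (n, n+1, n, n) together with a short exact sequence of representations 0 → P₄ⁿ⁺¹ → P₂ ⊕ P₁ⁿ → M → 0. (These are the modules on one of the special tubes of the quiver Q.) -/

import Mathlib

/-!
The module `M` is the cokernel itself: at vertices 1–3 it agrees with `P₂ ⊕ P₁ⁿ`, so
`M = (kⁿ, kⁿ⁺¹, kⁿ, kⁿ)` with `b = d = id`, `a` prepending a zero coordinate and `c` forgetting
the last one. An endomorphism of `M` is determined by its component at vertex 2, which commutes
with `a ∘ c`, the nilpotent shift of `kⁿ⁺¹` (a single Jordan block, so its kernel is a line). An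
idempotent commuting with a nilpotent operator `N` is `0` or `1` as soon as `ker N` is a line:
otherwise its image and its kernel are nonzero `N`-stable subspaces, and each would meet `ker N`.
-/

variable (k : Type) [Field k]

/-- A finite-dimensional representation of the quiver `Q` with vertices `1,2,3,4`
and arrows `a : 1 → 2`, `b : 1 → 3`, `c : 2 → 4`, `d : 3 → 4`. -/
structure QRep where
  V1 : Type
  V2 : Type
  V3 : Type
  V4 : Type
  [acg1 : AddCommGroup V1]
  [acg2 : AddCommGroup V2]
  [acg3 : AddCommGroup V3]
  [acg4 : AddCommGroup V4]
  [mod1 : Module k V1]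
  [mod2 : Module k V2]
  [mod3 : Module k V3]
  [mod4 : Module k V4]
  [fin1 : FiniteDimensional k V1]
  [fin2 : FiniteDimensional k V2]
  [fin3 : FiniteDimensional k V3]
  [fin4 : FiniteDimensional k V4]
  ma : V1 →ₗ[k] V2
  mb : V1 →ₗ[k] V3
  mc : V2 →ₗ[k] V4
  md : V3 →ₗ[k] V4

attribute [instance] QRep.acg1 QRep.acg2 QRep.acg3 QRep.acg4
  QRep.mod1 QRep.mod2 QRep.mod3 QRep.mod4
  QRep.fin1 QRep.fin2 QRep.fin3 QRep.fin4

variable {k}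

/-- Morphisms of representations of `Q`. -/
@[ext]
structure QHom (M N : QRep k) where
  f1 : M.V1 →ₗ[k] N.V1
  f2 : M.V2 →ₗ[k] N.V2
  f3 : M.V3 →ₗ[k] N.V3
  f4 : M.V4 →ₗ[k] N.V4
  comm_a : f2 ∘ₗ M.ma = N.ma ∘ₗ f1
  comm_b : f3 ∘ₗ M.mb = N.mb ∘ₗ f1
  comm_c : f4 ∘ₗ M.mc = N.mc ∘ₗ f2
  comm_d : f4 ∘ₗ M.md = N.md ∘ₗ f3

/-- Two representations are isomorphic iff there is a morphism all of whose
components are bijective. -/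
def QIso (M N : QRep k) : Prop :=
  ∃ f : QHom M N, Function.Bijective f.f1 ∧ Function.Bijective f.f2 ∧
    Function.Bijective f.f3 ∧ Function.Bijective f.f4

/-- The zero representation(s). -/
def QRep.IsZeroRep (M : QRep k) : Prop :=
  Subsingleton M.V1 ∧ Subsingleton M.V2 ∧ Subsingleton M.V3 ∧ Subsingleton M.V4

/-- Vertexwise direct sum of representations. -/
def QRep.dsum (M N : QRep k) : QRep k where
  V1 := M.V1 × N.V1
  V2 := M.V2 × N.V2
  V3 := M.V3 × N.V3
  V4 := M.V4 × N.V4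
  ma := M.ma.prodMap N.ma
  mb := M.mb.prodMap N.mb
  mc := M.mc.prodMap N.mc
  md := M.md.prodMap N.md

/-- Direct sum of `n` copies of a representation. -/
def QRep.dpow (M : QRep k) (n : ℕ) : QRep k where
  V1 := Fin n → M.V1
  V2 := Fin n → M.V2
  V3 := Fin n → M.V3
  V4 := Fin n → M.V4
  ma := M.ma.compLeft (Fin n)
  mb := M.mb.compLeft (Fin n)
  mc := M.mc.compLeft (Fin n)
  md := M.md.compLeft (Fin n)

/-- A representation is indecomposable if it is nonzero and not isomorphic to a
direct sum of two nonzero representations. -/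
def QRep.Indecomposable (M : QRep k) : Prop :=
  ¬ M.IsZeroRep ∧ ∀ A B : QRep k, QIso M (A.dsum B) → A.IsZeroRep ∨ B.IsZeroRep

/-- `0 → A → B → C → 0` is short exact (vertexwise). -/
def QShortExact {A B C : QRep k} (f : QHom A B) (g : QHom B C) : Prop :=
  (Function.Injective f.f1 ∧ Function.Injective f.f2 ∧
    Function.Injective f.f3 ∧ Function.Injective f.f4) ∧
  (Function.Surjective g.f1 ∧ Function.Surjective g.f2 ∧
    Function.Surjective g.f3 ∧ Function.Surjective g.f4) ∧
  (LinearMap.range f.f1 = LinearMap.ker g.f1 ∧ LinearMap.range f.f2 = LinearMap.ker g.f2 ∧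
    LinearMap.range f.f3 = LinearMap.ker g.f3 ∧ LinearMap.range f.f4 = LinearMap.ker g.f4)

variable (k)

/-- The `n×n` Jordan block with eigenvalue `lam`, as a linear endomorphism of `kⁿ`. -/
def jordan (n : ℕ) (lam : k) : (Fin n → k) →ₗ[k] (Fin n → k) :=
  Matrix.mulVecLin (Matrix.of fun i j : Fin n =>
    if i = j then lam else if (i : ℕ) + 1 = (j : ℕ) then 1 else 0)

/-- The representation `M_n(λ) = (kⁿ,kⁿ,kⁿ,kⁿ; id,id,id,J_n(λ))`. -/
def Mlam (n : ℕ) (lam : k) : QRep k where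
  V1 := Fin n → k
  V2 := Fin n → k
  V3 := Fin n → k
  V4 := Fin n → k
  ma := LinearMap.id
  mb := LinearMap.id
  mc := LinearMap.id
  md := jordan k n lam

/-- The indecomposable projective `P₁ = (k,k,k,k²)`. -/
def P1 : QRep k where
  V1 := k
  V2 := k
  V3 := k
  V4 := k × k
  ma := LinearMap.id
  mb := LinearMap.id
  mc := LinearMap.inl k k k
  md := LinearMap.inr k k k

/-- The indecomposable projective `P₂ = (0,k,0,k)`. -/
def P2 : QRep k where
  V1 := Fin 0 → k
  V2 := k
  V3 := Fin 0 → k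
  V4 := k
  ma := 0
  mb := 0
  mc := LinearMap.id
  md := 0

/-- The indecomposable projective `P₃ = (0,0,k,k)`. -/
def P3 : QRep k where
  V1 := Fin 0 → k
  V2 := Fin 0 → k
  V3 := k
  V4 := k
  ma := 0
  mb := 0
  mc := 0
  md := LinearMap.id

/-- The indecomposable projective `P₄ = (0,0,0,k)`. -/
def P4 : QRep k where
  V1 := Fin 0 → k
  V2 := Fin 0 → k
  V3 := Fin 0 → k
  V4 := k
  ma := 0
  mb := 0
  mc := 0
  md := 0

variable {k}

theorem Module.End.exists_pow_apply_ne_zero_mem_ker {R M : Type*} [Semiring R] [AddCommMonoid M]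
    [Module R M] {N : Module.End R M} (hN : IsNilpotent N) {x : M} (hx : x ≠ 0) :
    ∃ m, (N ^ m) x ≠ 0 ∧ (N ^ m) x ∈ LinearMap.ker N := by
  obtain ⟨p, hp⟩ := hN
  suffices ∀ p, (N ^ p) x = 0 → ∃ m, (N ^ m) x ≠ 0 ∧ N ((N ^ m) x) = 0 from
    this p (by simp [hp])
  intro p
  induction p with
  | zero => exact fun h => absurd (by simpa using h) hx
  | succ p ih =>
    intro hp
    by_cases hpx : (N ^ p) x = 0
    · exact ih hpx
    · exact ⟨p, hpx, by rwa [← Module.End.mul_apply, ← pow_succ']⟩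

theorem IsIdempotentElem.eq_zero_or_eq_one_of_commute_isNilpotent {V : Type*} [AddCommGroup V]
    [Module k V] {e N : Module.End k V} (he : IsIdempotentElem e) (hN : IsNilpotent N)
    (heN : Commute e N) {v : V} (hker : LinearMap.ker N ≤ k ∙ v) : e = 0 ∨ e = 1 := by
  have fixed_in_ker : ∀ f : Module.End k V, IsIdempotentElem f → Commute f N → f ≠ 0 →
      ∃ u ∈ LinearMap.ker N, u ≠ 0 ∧ f u = u := by
    intro f hf hfN hf0
    obtain ⟨x, hx⟩ : ∃ x, f x ≠ 0 := by
      by_contra! h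
      exact hf0 (LinearMap.ext h)
    obtain ⟨m, hm0, hm⟩ := Module.End.exists_pow_apply_ne_zero_mem_ker hN hx
    refine ⟨_, hm, hm0, ?_⟩
    rw [← Module.End.mul_apply, (hfN.pow_right m).eq, Module.End.mul_apply,
      ← Module.End.mul_apply f f, hf.eq]
  by_contra! h
  obtain ⟨u, hu, hu0, heu⟩ := fixed_in_ker e he heN h.1
  obtain ⟨w, hw, hw0, hew⟩ := fixed_in_ker (1 - e) he.one_sub
    ((Commute.one_left N).sub_left heN) (sub_ne_zero.mpr h.2.symm)
  obtain ⟨a, rfl⟩ := Submodule.mem_span_singleton.mp (hker hu)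
  obtain ⟨b, rfl⟩ := Submodule.mem_span_singleton.mp (hker hw)
  have hb : b ≠ 0 := by
    rintro rfl
    simp at hw0
  have hebv : e (b • v) = 0 := by
    rwa [LinearMap.sub_apply, Module.End.one_apply, sub_eq_self] at hew
  apply hu0
  rw [← heu, ← inv_mul_cancel_right₀ hb a, ← smul_smul, map_smul, hebv, smul_zero]

theorem LinearMap.range_zero_eq_ker_of_injective {V W U : Type*} [AddCommGroup V] [AddCommGroup W]
    [AddCommGroup U] [Module k V] [Module k W] [Module k U] {g : W →ₗ[k] U}
    (hg : Function.Injective g) : LinearMap.range (0 : V →ₗ[k] W) = LinearMap.ker g := by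
  rw [LinearMap.range_zero, LinearMap.ker_eq_bot.mpr hg]

theorem LinearEquiv.symm_comp_eq_comp_symm {V V' W W' : Type*} [AddCommGroup V] [AddCommGroup V']
    [AddCommGroup W] [AddCommGroup W'] [Module k V] [Module k V'] [Module k W] [Module k W']
    {f : V ≃ₗ[k] V'} {g : W ≃ₗ[k] W'} {m : V →ₗ[k] W} {m' : V' →ₗ[k] W'}
    (h : g.toLinearMap ∘ₗ m = m' ∘ₗ f.toLinearMap) :
    g.symm.toLinearMap ∘ₗ m' = m ∘ₗ f.symm.toLinearMap := by
  ext x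
  apply g.injective
  simpa using (LinearMap.congr_fun h (f.symm x)).symm

theorem subsingleton_of_inl_comp_fst_eq_zero {V W : Type*} [AddCommGroup V] [AddCommGroup W]
    [Module k V] [Module k W] (h : LinearMap.inl k V W ∘ₗ LinearMap.fst k V W = 0) :
    Subsingleton V :=
  subsingleton_of_forall_eq 0 fun a => by
    simpa using congrArg Prod.fst (LinearMap.congr_fun h (a, 0))

theorem subsingleton_of_inl_comp_fst_eq_id {V W : Type*} [AddCommGroup V] [AddCommGroup W]
    [Module k V] [Module k W] (h : LinearMap.inl k V W ∘ₗ LinearMap.fst k V W = LinearMap.id) :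
    Subsingleton W :=
  subsingleton_of_forall_eq 0 fun b => by
    simpa using (congrArg Prod.snd (LinearMap.congr_fun h (0, b))).symm

namespace QHom

variable {M N P : QRep k}

def id (M : QRep k) : QHom M M where
  f1 := LinearMap.id
  f2 := LinearMap.id
  f3 := LinearMap.id
  f4 := LinearMap.id
  comm_a := rfl
  comm_b := rfl
  comm_c := rfl
  comm_d := rfl

def comp (g : QHom N P) (f : QHom M N) : QHom M P where
  f1 := g.f1 ∘ₗ f.f1
  f2 := g.f2 ∘ₗ f.f2
  f3 := g.f3 ∘ₗ f.f3
  f4 := g.f4 ∘ₗ f.f4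
  comm_a := by
    rw [LinearMap.comp_assoc, f.comm_a, ← LinearMap.comp_assoc, g.comm_a, LinearMap.comp_assoc]
  comm_b := by
    rw [LinearMap.comp_assoc, f.comm_b, ← LinearMap.comp_assoc, g.comm_b, LinearMap.comp_assoc]
  comm_c := by
    rw [LinearMap.comp_assoc, f.comm_c, ← LinearMap.comp_assoc, g.comm_c, LinearMap.comp_assoc]
  comm_d := by
    rw [LinearMap.comp_assoc, f.comm_d, ← LinearMap.comp_assoc, g.comm_d, LinearMap.comp_assoc]

instance : Zero (QHom M N) where
  zero :=
    { f1 := 0, f2 := 0, f3 := 0, f4 := 0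
      comm_a := by simp
      comm_b := by simp
      comm_c := by simp
      comm_d := by simp }

theorem comp_assoc {Q : QRep k} (h : QHom P Q) (g : QHom N P) (f : QHom M N) :
    (h.comp g).comp f = h.comp (g.comp f) := rfl

theorem id_comp (f : QHom M N) : (id N).comp f = f := rfl

theorem comp_id (f : QHom M N) : f.comp (id M) = f := rfl

theorem zero_comp (f : QHom M N) : (0 : QHom N P).comp f = 0 := rfl

theorem comp_zero (g : QHom N P) : g.comp (0 : QHom M N) = 0 := by
  ext : 1 <;> exact LinearMap.comp_zero _

variable {A B : QRep k}

def projLeft (A B : QRep k) : QHom (A.dsum B) (A.dsum B) where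
  f1 := LinearMap.inl k _ _ ∘ₗ LinearMap.fst k _ _
  f2 := LinearMap.inl k _ _ ∘ₗ LinearMap.fst k _ _
  f3 := LinearMap.inl k _ _ ∘ₗ LinearMap.fst k _ _
  f4 := LinearMap.inl k _ _ ∘ₗ LinearMap.fst k _ _
  comm_a := LinearMap.ext fun _ => Prod.ext rfl (map_zero B.ma).symm
  comm_b := LinearMap.ext fun _ => Prod.ext rfl (map_zero B.mb).symm
  comm_c := LinearMap.ext fun _ => Prod.ext rfl (map_zero B.mc).symm
  comm_d := LinearMap.ext fun _ => Prod.ext rfl (map_zero B.md).symm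

theorem projLeft_comp_projLeft : (projLeft A B).comp (projLeft A B) = projLeft A B := rfl

theorem isZeroRep_of_projLeft_eq_zero (h : projLeft A B = 0) : A.IsZeroRep :=
  ⟨subsingleton_of_inl_comp_fst_eq_zero (congrArg f1 h),
    subsingleton_of_inl_comp_fst_eq_zero (congrArg f2 h),
    subsingleton_of_inl_comp_fst_eq_zero (congrArg f3 h),
    subsingleton_of_inl_comp_fst_eq_zero (congrArg f4 h)⟩

theorem isZeroRep_of_projLeft_eq_id (h : projLeft A B = id (A.dsum B)) : B.IsZeroRep :=
  ⟨subsingleton_of_inl_comp_fst_eq_id (congrArg f1 h),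
    subsingleton_of_inl_comp_fst_eq_id (congrArg f2 h),
    subsingleton_of_inl_comp_fst_eq_id (congrArg f3 h),
    subsingleton_of_inl_comp_fst_eq_id (congrArg f4 h)⟩

end QHom

theorem QIso.exists_comp_eq_id {M N : QRep k} (h : QIso M N) :
    ∃ (φ : QHom M N) (ψ : QHom N M), φ.comp ψ = QHom.id N := by
  obtain ⟨φ, h1, h2, h3, h4⟩ := h
  let e1 := LinearEquiv.ofBijective φ.f1 h1
  let e2 := LinearEquiv.ofBijective φ.f2 h2
  let e3 := LinearEquiv.ofBijective φ.f3 h3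
  let e4 := LinearEquiv.ofBijective φ.f4 h4
  let ψ : QHom N M :=
    { f1 := e1.symm, f2 := e2.symm, f3 := e3.symm, f4 := e4.symm
      comm_a := LinearEquiv.symm_comp_eq_comp_symm (f := e1) (g := e2) φ.comm_a
      comm_b := LinearEquiv.symm_comp_eq_comp_symm (f := e1) (g := e3) φ.comm_b
      comm_c := LinearEquiv.symm_comp_eq_comp_symm (f := e2) (g := e4) φ.comm_c
      comm_d := LinearEquiv.symm_comp_eq_comp_symm (f := e3) (g := e4) φ.comm_d }
  exact ⟨φ, ψ, QHom.ext e1.comp_symm e2.comp_symm e3.comp_symm e4.comp_symm⟩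

theorem QRep.indecomposable_of_forall_idempotent {M : QRep k} (hM : ¬ M.IsZeroRep)
    (h : ∀ e : QHom M M, e.comp e = e → e = 0 ∨ e = QHom.id M) : M.Indecomposable := by
  refine ⟨hM, fun A B hMAB => ?_⟩
  obtain ⟨φ, ψ, hφψ⟩ := hMAB.exists_comp_eq_id
  let p := QHom.projLeft A B
  have hp : p = φ.comp ((ψ.comp (p.comp φ)).comp ψ) := by
    simp only [QHom.comp_assoc, hφψ, QHom.comp_id]
    rw [← QHom.comp_assoc, hφψ, QHom.id_comp]
  have he : (ψ.comp (p.comp φ)).comp (ψ.comp (p.comp φ)) = ψ.comp (p.comp φ) := by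
    simp only [QHom.comp_assoc]
    rw [← QHom.comp_assoc φ, hφψ, QHom.id_comp, ← QHom.comp_assoc p,
      QHom.projLeft_comp_projLeft]
  rcases h _ he with he0 | he1
  · exact Or.inl (QHom.isZeroRep_of_projLeft_eq_zero (show p = 0 by
      rw [hp, he0, QHom.zero_comp, QHom.comp_zero]))
  · exact Or.inr (QHom.isZeroRep_of_projLeft_eq_id (show p = QHom.id _ by
      rw [hp, he1, QHom.id_comp, hφψ]))

section Shift

variable (k) (n : ℕ)

def prependZero : (Fin n → k) →ₗ[k] (Fin (n + 1) → k) :=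
  (Fin.consLinearEquiv k fun _ => k).toLinearMap ∘ₗ LinearMap.inr k k (Fin n → k)

def dropLast : (Fin (n + 1) → k) →ₗ[k] (Fin n → k) :=
  LinearMap.funLeft k k Fin.castSucc

variable {k n}

@[simp] theorem prependZero_apply (x : Fin n → k) : prependZero k n x = Fin.cons 0 x := rfl

@[simp] theorem dropLast_apply (y : Fin (n + 1) → k) :
    dropLast k n y = fun i => y i.castSucc := rfl

theorem prependZero_injective : Function.Injective (prependZero k n) :=
  fun _ _ h => by simpa using h

theorem prependZero_comp_dropLast_pow_apply_of_lt (p : ℕ) (y : Fin (n + 1) → k)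
    {i : Fin (n + 1)} (hi : (i : ℕ) < p) : ((prependZero k n ∘ₗ dropLast k n) ^ p) y i = 0 := by
  induction p generalizing i with
  | zero => exact absurd hi (Nat.not_lt_zero _)
  | succ p ih =>
    rw [pow_succ', Module.End.mul_apply]
    cases i using Fin.cases with
    | zero => rfl
    | succ j => exact ih (by simp at hi ⊢; omega)

theorem isNilpotent_prependZero_comp_dropLast : IsNilpotent (prependZero k n ∘ₗ dropLast k n) :=
  ⟨n + 1, LinearMap.ext fun y => funext fun i =>
    prependZero_comp_dropLast_pow_apply_of_lt _ y i.isLt⟩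

theorem ker_prependZero_comp_dropLast_le :
    LinearMap.ker (prependZero k n ∘ₗ dropLast k n) ≤ k ∙ Pi.single (Fin.last n) 1 := by
  intro y hy
  have hdrop : dropLast k n y = 0 := prependZero_injective (by rw [map_zero]; exact hy)
  refine Submodule.mem_span_singleton.mpr ⟨y (Fin.last n), funext fun i => ?_⟩
  cases i using Fin.lastCases with
  | last => simp
  | cast j => simpa using (congrFun hdrop j).symm

end Shift

variable (k) in
def tubeRep (n : ℕ) : QRep k where
  V1 := Fin n → k
  V2 := Fin (n + 1) → k
  V3 := Fin n → k
  V4 := Fin n → k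
  ma := prependZero k n
  mb := LinearMap.id
  mc := dropLast k n
  md := LinearMap.id

namespace tubeRep

variable {n : ℕ}

theorem hom_ext {e e' : QHom (tubeRep k n) (tubeRep k n)} (h : e.f2 = e'.f2) : e = e' := by
  have h1 : e.f1 = e'.f1 := LinearMap.ext fun x => prependZero_injective <|
    (LinearMap.congr_fun e.comm_a x).symm.trans (by rw [h]; exact LinearMap.congr_fun e'.comm_a x)
  have h3 : e.f3 = e'.f3 := e.comm_b.trans (h1.trans e'.comm_b.symm)
  exact QHom.ext h1 h h3 (e.comm_d.trans (h3.trans e'.comm_d.symm))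

theorem commute_f2 (e : QHom (tubeRep k n) (tubeRep k n)) :
    Commute (e.f2 : Module.End k (Fin (n + 1) → k)) (prependZero k n ∘ₗ dropLast k n) := by
  have h41 : e.f4 = e.f1 := e.comm_d.trans e.comm_b
  refine LinearMap.ext fun y => (LinearMap.congr_fun e.comm_a (dropLast k n y)).trans ?_
  rw [← h41]
  exact congrArg (prependZero k n) (LinearMap.congr_fun e.comm_c y)

theorem idempotent_eq_zero_or_id (e : QHom (tubeRep k n) (tubeRep k n)) (he : e.comp e = e) :
    e = 0 ∨ e = QHom.id _ := by
  rcases IsIdempotentElem.eq_zero_or_eq_one_of_commute_isNilpotent (congrArg QHom.f2 he)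
    isNilpotent_prependZero_comp_dropLast (commute_f2 e) ker_prependZero_comp_dropLast_le
    with h2 | h2
  exacts [Or.inl (hom_ext h2), Or.inr (hom_ext h2)]

theorem indecomposable : (tubeRep k n).Indecomposable :=
  QRep.indecomposable_of_forall_idempotent (fun h => not_subsingleton (Fin (n + 1) → k) h.2.1)
    idempotent_eq_zero_or_id

variable (k) (n)

-- The `n + 1` relations `c y_j = d x_j` (`j < n`) and `c y_n = 0` of `M`, where `y_0` generates
-- `P₂`, `x_j` generates the `j`-th copy of `P₁` and `y_{j+1} = a x_j`.
def syzygyIncl₄ : (Fin (n + 1) → k) →ₗ[k] k × (Fin n → k × k) :=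
  (LinearMap.proj 0).prod
    (LinearMap.pi fun i => (LinearMap.proj i.succ).prod (-LinearMap.proj i.castSucc))

def projCover₄ : k × (Fin n → k × k) →ₗ[k] (Fin n → k) :=
  (LinearMap.snd k k k).compLeft (Fin n) ∘ₗ LinearMap.snd k k _ +
    dropLast k n ∘ₗ (Fin.consLinearEquiv k fun _ => k).toLinearMap ∘ₗ
      LinearMap.id.prodMap ((LinearMap.fst k k k).compLeft (Fin n))

variable {k n}

@[simp] theorem syzygyIncl₄_apply (c : Fin (n + 1) → k) :
    syzygyIncl₄ k n c = (c 0, fun i => (c i.succ, -c i.castSucc)) := rfl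

@[simp] theorem projCover₄_apply (t : k) (z : Fin n → k × k) :
    projCover₄ k n (t, z) =
      fun i => (z i).2 + (Fin.cons t fun j => (z j).1 : Fin (n + 1) → k) i.castSucc :=
  rfl

theorem projCover₄_comp_syzygyIncl₄ : projCover₄ k n ∘ₗ syzygyIncl₄ k n = 0 := by
  refine LinearMap.ext fun c => funext fun i => ?_
  have hc : (Fin.cons (c 0) fun j => c j.succ : Fin (n + 1) → k) = c := Fin.cons_self_tail c
  simp [hc]

theorem projCover₄_inl (t : k) (x : Fin n → k) :
    projCover₄ k n (t, fun i => (x i, 0)) = dropLast k n (Fin.cons t x) := by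
  simp

theorem projCover₄_inr (x : Fin n → k) : projCover₄ k n (0, fun i => (0, x i)) = x := by
  have hzero : (Fin.cons 0 0 : Fin (n + 1) → k) = 0 := Matrix.cons_zero_zero
  simp [← Pi.zero_def, hzero]

theorem syzygyIncl₄_injective : Function.Injective (syzygyIncl₄ k n) := by
  intro c d h
  simp only [syzygyIncl₄_apply, Prod.mk.injEq, funext_iff] at h
  exact funext fun i => i.cases h.1 fun j => (h.2 j).1

theorem ker_projCover₄_le :
    LinearMap.ker (projCover₄ k n) ≤ LinearMap.range (syzygyIncl₄ k n) := by
  rintro ⟨t, z⟩ hz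
  refine ⟨Fin.cons t fun j => (z j).1, ?_⟩
  refine Prod.ext rfl (funext fun i => Prod.ext rfl ?_)
  exact (eq_neg_of_add_eq_zero_left (congrFun hz i)).symm

variable (k n)

def syzygyIncl : QHom ((P4 k).dpow (n + 1)) ((P2 k).dsum ((P1 k).dpow n)) where
  f1 := 0
  f2 := 0
  f3 := 0
  f4 := syzygyIncl₄ k n
  comm_a := Subsingleton.elim (α := (Fin (n + 1) → Fin 0 → k) →ₗ[k] _) _ _
  comm_b := Subsingleton.elim (α := (Fin (n + 1) → Fin 0 → k) →ₗ[k] _) _ _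
  comm_c := Subsingleton.elim (α := (Fin (n + 1) → Fin 0 → k) →ₗ[k] _) _ _
  comm_d := Subsingleton.elim (α := (Fin (n + 1) → Fin 0 → k) →ₗ[k] _) _ _

def projCover : QHom ((P2 k).dsum ((P1 k).dpow n)) (tubeRep k n) where
  f1 := LinearMap.snd k (Fin 0 → k) (Fin n → k)
  f2 := (Fin.consLinearEquiv k fun _ => k).toLinearMap
  f3 := LinearMap.snd k (Fin 0 → k) (Fin n → k)
  f4 := projCover₄ k n
  comm_a := rfl
  comm_b := rfl
  comm_c := LinearMap.ext fun ⟨t, x⟩ => projCover₄_inl (k := k) t x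
  comm_d := LinearMap.ext fun ⟨_, x⟩ => projCover₄_inr (k := k) x

theorem shortExact : QShortExact (syzygyIncl k n) (projCover k n) := by
  have hzero : ∀ x y : Fin (n + 1) → Fin 0 → k, x = y := fun _ _ => Subsingleton.elim _ _
  have hsnd : Function.Injective (LinearMap.snd k (Fin 0 → k) (Fin n → k)) :=
    fun _ _ h => Prod.ext (Subsingleton.elim _ _) h
  exact ⟨⟨fun x y _ => hzero x y, fun x y _ => hzero x y, fun x y _ => hzero x y,
      syzygyIncl₄_injective⟩,
    ⟨fun x => ⟨(0, x), rfl⟩, (Fin.consLinearEquiv k _).surjective, fun x => ⟨(0, x), rfl⟩,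
      fun x => ⟨_, projCover₄_inr x⟩⟩,
    ⟨LinearMap.range_zero_eq_ker_of_injective hsnd,
      LinearMap.range_zero_eq_ker_of_injective (Fin.consLinearEquiv k _).injective,
      LinearMap.range_zero_eq_ker_of_injective hsnd,
      le_antisymm (LinearMap.range_le_ker_iff.mpr projCover₄_comp_syzygyIncl₄)
        ker_projCover₄_le⟩⟩

end tubeRep

/-- there is an indecomposable representation `M` of `Q` with the
given dimension vector together with a short exact sequence as indicated. -/
theorem stmt11 (k : Type) [Field k] (n : ℕ) :
    ∃ M : QRep k, M.Indecomposable ∧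
      Module.finrank k M.V1 = n ∧ Module.finrank k M.V2 = n+1 ∧
      Module.finrank k M.V3 = n ∧ Module.finrank k M.V4 = n ∧
      ∃ (f : QHom ((P4 k).dpow (n+1)) ((P2 k).dsum ((P1 k).dpow n))) (g : QHom ((P2 k).dsum ((P1 k).dpow n)) M), QShortExact f g :=
  ⟨tubeRep k n, tubeRep.indecomposable, Module.finrank_fin_fun k, Module.finrank_fin_fun k,
    Module.finrank_fin_fun k, Module.finrank_fin_fun k,
    tubeRep.syzygyIncl k n, tubeRep.projCover k n, tubeRep.shortExact k n⟩
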